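/- arXiv:1401.5146 — 2 statements merged into one kernel-verified Lean document; each statement's English description precedes it below -/
import Mathlib

section
/- Let α, β, θ, γ > 0 with α < β, and let x₀ > 0. Set t₂ = θ^{−1} log((α − β − θx₀)/(α − β)) (which is positive and finite). Then the function x defined by x(t) = (x₀ − (α − β)/θ)·e^{−θt} + (α − β)/θ for t ∈ [0, t₂] and x(t) = ((α − β)/γ)·(1 − e^{−γ(t − t₂)}) for t ≥ t₂ is continuous, satisfies x(t₂) = 0 with x(t) > 0 for t < t₂, and solves the fluid equation x(t) = x₀ + (α − β)t − θ∫₀ᵗ x⁺(s) ds + γ∫₀ᵗ x⁻(s) ds for all t ≥ 0. -/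
/-!
By the fundamental theorem of calculus it suffices that `x(0) = x₀` and that `x` solves the ODE
`x' = (α - β) - θ x⁺ + γ x⁻`. While `x ≥ 0` this is the linear equation `x' = (α - β) - θ x`,
solved by exponential relaxation towards `(α - β)/θ < 0`; `t₂` is the time at which that
relaxation reaches `0`. From then on `x ≤ 0` and the equation is `x' = (α - β) - γ x`, solved by
relaxation from `0` towards `(α - β)/γ`. Both pieces have slope `α - β` at `t₂`, so the glued
function is differentiable there as well.
-/
/-- `x : ℝ → ℝ`, viewed as a function on `[0,∞)`, is a continuous solution of the fluid
equation `x(t) = x₀ + (α - β)t - θ∫₀ᵗ x⁺(s) ds + γ∫₀ᵗ x⁻(s) ds` for `t ≥ 0`. -/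
def IsFluidSolution (α β θ γ x₀ : ℝ) (x : ℝ → ℝ) : Prop :=
  ContinuousOn x (Set.Ici 0) ∧
    ∀ t : ℝ, 0 ≤ t →
      x t = x₀ + (α - β) * t - θ * (∫ s in (0:ℝ)..t, max (x s) 0)
        + γ * (∫ s in (0:ℝ)..t, max (-x s) 0)

open Set Real

lemma hasDerivAt_of_eqOn_Iic_of_eqOn_Ici {f g h : ℝ → ℝ} {a t f' : ℝ}
    (hg : EqOn f g (Iic a)) (hh : EqOn f h (Ici a))
    (hg' : t ≤ a → HasDerivAt g f' t) (hh' : a ≤ t → HasDerivAt h f' t) :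
    HasDerivAt f f' t := by
  rcases lt_trichotomy t a with hta | rfl | hat
  · exact ((hg' hta.le).hasDerivWithinAt.congr_of_mem hg hta.le).hasDerivAt (Iic_mem_nhds hta)
  · rw [← hasDerivWithinAt_univ, ← Iic_union_Ici]
    exact ((hg' le_rfl).hasDerivWithinAt.congr_of_mem hg self_mem_Iic).union
      ((hh' le_rfl).hasDerivWithinAt.congr_of_mem hh self_mem_Ici)
  · exact ((hh' hat.le).hasDerivWithinAt.congr_of_mem hh hat.le).hasDerivAt (Ici_mem_nhds hat)

lemma hasDerivAt_relaxation {k : ℝ} (hk : k ≠ 0) (A c s₀ t : ℝ) :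
    HasDerivAt (fun s => A * exp (-(k * (s - s₀))) + c / k)
      (c - k * (A * exp (-(k * (t - s₀))) + c / k)) t := by
  have hlin : HasDerivAt (fun s => -(k * (s - s₀))) (-k) t := by
    simpa using (((hasDerivAt_id t).sub_const s₀).const_mul k).fun_neg
  refine ((hlin.exp.const_mul A).add_const (c / k)).congr_deriv ?_
  field_simp
  ring

lemma relaxation_pos_of_lt {k A D s₀ t₁ t : ℝ} (hk : 0 < k) (hA : 0 < A)
    (h₁ : A * exp (-(k * (t₁ - s₀))) + D = 0) (ht : t < t₁) :
    0 < A * exp (-(k * (t - s₀))) + D := by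
  have : exp (-(k * (t₁ - s₀))) < exp (-(k * (t - s₀))) := exp_lt_exp.mpr (by nlinarith)
  nlinarith

lemma relaxation_nonpos {k c s₀ t : ℝ} (hk : 0 < k) (hc : c ≤ 0) (ht : s₀ ≤ t) :
    -(c / k) * exp (-(k * (t - s₀))) + c / k ≤ 0 := by
  have : exp (-(k * (t - s₀))) ≤ 1 := exp_le_one_iff.mpr (by nlinarith)
  have : c / k ≤ 0 := div_nonpos_of_nonpos_of_nonneg hc hk.le
  nlinarith

section HittingTime

variable {c θ x₀ : ℝ}

lemma one_lt_sub_mul_div_self (hθ : 0 < θ) (hc : c < 0) (hx₀ : 0 < x₀) :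
    1 < (c - θ * x₀) / c := by
  rw [one_lt_div_of_neg hc]
  nlinarith

lemma hittingTime_pos (hθ : 0 < θ) (hc : c < 0) (hx₀ : 0 < x₀) :
    0 < θ⁻¹ * log ((c - θ * x₀) / c) :=
  mul_pos (inv_pos.mpr hθ) (log_pos (one_lt_sub_mul_div_self hθ hc hx₀))

lemma relaxation_hittingTime_eq_zero (hθ : 0 < θ) (hc : c < 0) (hx₀ : 0 < x₀) :
    (x₀ - c / θ) * exp (-(θ * (θ⁻¹ * log ((c - θ * x₀) / c)))) + c / θ = 0 := by
  have hratio := one_lt_sub_mul_div_self hθ hc hx₀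
  rw [← mul_assoc, mul_inv_cancel₀ hθ.ne', one_mul, exp_neg, exp_log (by linarith)]
  have hne : c - x₀ * θ ≠ 0 := by nlinarith
  rw [inv_div]
  field_simp
  ring

end HittingTime

section Drift

variable {α β θ γ : ℝ}

def fluidDrift (α β θ γ v : ℝ) : ℝ :=
  α - β - θ * max v 0 + γ * max (-v) 0

lemma fluidDrift_of_nonneg {v : ℝ} (hv : 0 ≤ v) : fluidDrift α β θ γ v = α - β - θ * v := by
  rw [fluidDrift, max_eq_left hv, max_eq_right (neg_nonpos.mpr hv)]
  ring

lemma fluidDrift_of_nonpos {v : ℝ} (hv : v ≤ 0) : fluidDrift α β θ γ v = α - β - γ * v := by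
  rw [fluidDrift, max_eq_right hv, max_eq_left (neg_nonneg.mpr hv)]
  ring

theorem IsFluidSolution.of_hasDerivAt {x₀ : ℝ} {x : ℝ → ℝ} (h₀ : x 0 = x₀)
    (hx : ∀ t, 0 ≤ t → HasDerivAt x (fluidDrift α β θ γ (x t)) t) :
    IsFluidSolution α β θ γ x₀ x := by
  have hcont : ContinuousOn x (Ici 0) := fun t ht => (hx t ht).continuousAt.continuousWithinAt
  refine ⟨hcont, fun t ht => ?_⟩
  have hcont' : ContinuousOn x (uIcc 0 t) := hcont.mono (uIcc_of_le ht ▸ Icc_subset_Ici_self)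
  have hpos : IntervalIntegrable (fun s => θ * max (x s) 0) MeasureTheory.volume 0 t :=
    (continuousOn_const.mul (hcont'.sup continuousOn_const)).intervalIntegrable
  have hneg : IntervalIntegrable (fun s => γ * max (-x s) 0) MeasureTheory.volume 0 t :=
    (continuousOn_const.mul (hcont'.neg.sup continuousOn_const)).intervalIntegrable
  have hftc := intervalIntegral.integral_eq_sub_of_hasDerivAt
    (fun s hs => hx s (uIcc_of_le ht ▸ hs).1) ((intervalIntegrable_const.sub hpos).add hneg)
  unfold fluidDrift at hftc
  rw [intervalIntegral.integral_add (intervalIntegrable_const.sub hpos) hneg,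
    intervalIntegral.integral_sub intervalIntegrable_const hpos, intervalIntegral.integral_const,
    intervalIntegral.integral_const_mul, intervalIntegral.integral_const_mul, smul_eq_mul] at hftc
  linarith

end Drift

theorem stmt_10_general (α β θ γ x₀ t₂ : ℝ) (hθ : 0 < θ) (hγ : 0 < γ)
    (hαβ : α < β) (hx₀ : 0 < x₀)
    (ht₂ : t₂ = θ⁻¹ * Real.log ((α - β - θ * x₀) / (α - β)))
    (x : ℝ → ℝ)
    (hx : ∀ t : ℝ, x t =
      if t ≤ t₂ then (x₀ - (α - β) / θ) * Real.exp (-(θ * t)) + (α - β) / θ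
      else (α - β) / γ * (1 - Real.exp (-(γ * (t - t₂))))) :
    0 < t₂ ∧ ContinuousOn x (Set.Ici 0) ∧ x t₂ = 0 ∧
      (∀ t : ℝ, 0 ≤ t → t < t₂ → 0 < x t) ∧ IsFluidSolution α β θ γ x₀ x := by
  have hc : α - β < 0 := sub_neg.mpr hαβ
  have ht₂_pos : 0 < t₂ := ht₂ ▸ hittingTime_pos hθ hc hx₀
  have hzero : (x₀ - (α - β) / θ) * exp (-(θ * (t₂ - 0))) + (α - β) / θ = 0 := by
    simpa [← ht₂] using relaxation_hittingTime_eq_zero hθ hc hx₀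
  have hx_left : EqOn x (fun t => (x₀ - (α - β) / θ) * exp (-(θ * (t - 0))) + (α - β) / θ)
      (Iic t₂) := fun t ht => by simp [hx t, if_pos (mem_Iic.mp ht)]
  have hx_t₂ : x t₂ = 0 := (hx_left self_mem_Iic).trans hzero
  have hx_right : EqOn x (fun t => -((α - β) / γ) * exp (-(γ * (t - t₂))) + (α - β) / γ)
      (Ici t₂) := by
    intro t ht
    rcases (mem_Ici.mp ht).eq_or_lt with rfl | ht
    · simp [hx_t₂]
    · simp only [hx t, if_neg (not_le.mpr ht)]
      ring
  have hx_pos : ∀ t < t₂, 0 < x t := fun t ht => (hx_left ht.le).trans_gt <|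
    relaxation_pos_of_lt hθ (by linarith [div_neg_of_neg_of_pos hc hθ]) hzero ht
  have hx_nonpos : ∀ t, t₂ ≤ t → x t ≤ 0 := fun t ht =>
    (hx_right ht).trans_le (relaxation_nonpos hγ hc.le ht)
  have hderiv : ∀ t, HasDerivAt x (fluidDrift α β θ γ (x t)) t := by
    intro t
    refine hasDerivAt_of_eqOn_Iic_of_eqOn_Ici hx_left hx_right (fun ht => ?_) (fun ht => ?_)
    · have hxt : 0 ≤ x t := ht.eq_or_lt.elim (fun h => h ▸ hx_t₂.ge) (fun h => (hx_pos t h).le)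
      rw [fluidDrift_of_nonneg hxt, hx_left ht]
      exact hasDerivAt_relaxation hθ.ne' _ _ 0 t
    · rw [fluidDrift_of_nonpos (hx_nonpos t ht), hx_right ht]
      exact hasDerivAt_relaxation hγ.ne' _ _ t₂ t
  have hx_zero : x 0 = x₀ := by simp [hx_left ht₂_pos.le]
  have hfluid := IsFluidSolution.of_hasDerivAt hx_zero fun t _ => hderiv t
  exact ⟨ht₂_pos, hfluid.1, hx_t₂, fun t _ ht => hx_pos t ht, hfluid⟩

/-- For `α < β` and `x₀ > 0`, with
`t₂ = θ⁻¹ log((α - β - θx₀)/(α - β)) > 0`, the piecewise function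
`x(t) = (x₀ - (α - β)/θ)·e^{-θt} + (α - β)/θ` on `[0, t₂]` and
`x(t) = ((α - β)/γ)·(1 - e^{-γ(t - t₂)})` for `t ≥ t₂` is continuous, vanishes at `t₂`,
is positive on `[0, t₂)`, and solves the fluid equation. -/
theorem stmt_10 (α β θ γ x₀ t₂ : ℝ) (hα : 0 < α) (hβ : 0 < β) (hθ : 0 < θ) (hγ : 0 < γ)
    (hαβ : α < β) (hx₀ : 0 < x₀)
    (ht₂ : t₂ = θ⁻¹ * Real.log ((α - β - θ * x₀) / (α - β)))
    (x : ℝ → ℝ)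
    (hx : ∀ t : ℝ, x t =
      if t ≤ t₂ then (x₀ - (α - β) / θ) * Real.exp (-(θ * t)) + (α - β) / θ
      else (α - β) / γ * (1 - Real.exp (-(γ * (t - t₂))))) :
    0 < t₂ ∧ ContinuousOn x (Set.Ici 0) ∧ x t₂ = 0 ∧
      (∀ t : ℝ, 0 ≤ t → t < t₂ → 0 < x t) ∧ IsFluidSolution α β θ γ x₀ x :=
  stmt_10_general α β θ γ x₀ t₂ hθ hγ hαβ hx₀ ht₂ x hx
end

section
/- Let α, β, θ, γ > 0. Suppose w₁, w₂, y₁, y₂ : [0,∞) → ℝ are continuous functions satisfying y_i(t) = w_i(t) − θ∫₀ᵗ y_i⁺(s) ds + γ∫₀ᵗ y_i⁻(s) ds for all t ≥ 0 (i = 1, 2). Then for every t ≥ 0, sup_{s∈[0,t]} |y₁(s) − y₂(s)| ≤ e^{(θ+γ)t} · sup_{s∈[0,t]} |w₁(s) − w₂(s)|. -/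
/-- The sup of `|f|` over the interval `[0, t]`. -/
noncomputable def supNorm (f : ℝ → ℝ) (t : ℝ) : ℝ :=
  sSup ((fun s => |f s|) '' Set.Icc 0 t)

/-!
The drift `x ↦ γ x⁻ - θ x⁺` of the equation is `(θ + γ)`-Lipschitz, so the difference
`Δ = y₁ - y₂` satisfies `|Δ s| ≤ sup |w₁ - w₂| + (θ + γ) ∫₀ˢ |Δ|`, and Grönwall's inequality
in integral form bounds `|Δ s|` by `e^{(θ+γ)s} sup |w₁ - w₂|`.
-/

open Set Real intervalIntegral Filter Topology
open scoped NNReal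

theorem hasDerivWithinAt_integral_Ici {u : ℝ → ℝ} {a b x : ℝ} (hu : ContinuousOn u (Icc a b))
    (hx : x ∈ Ico a b) : HasDerivWithinAt (fun s => ∫ r in a..s, u r) (u x) (Ici x) x := by
  have hmem : Icc a b ∈ 𝓝[>] x := Icc_mem_nhdsGT_of_mem hx
  exact integral_hasDerivWithinAt_right
    ((hu.mono (Icc_subset_Icc_right hx.2.le)).intervalIntegrable_of_Icc hx.1)
    ⟨Icc a b, hmem, hu.aestronglyMeasurable measurableSet_Icc⟩
    ((hu x (Ico_subset_Icc_self hx)).mono_of_mem_nhdsWithin hmem)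

theorem add_mul_gronwallBound_zero (C K x : ℝ) :
    C + K * gronwallBound 0 K C x = C * exp (K * x) := by
  rcases eq_or_ne K 0 with rfl | hK
  · simp
  · rw [gronwallBound_of_K_ne_0 hK]
    field_simp
    ring

theorem le_mul_exp_of_le_add_mul_integral {u : ℝ → ℝ} {a b C K : ℝ}
    (hu : ContinuousOn u (Icc a b)) (hK : 0 ≤ K)
    (h : ∀ s ∈ Icc a b, u s ≤ C + K * ∫ r in a..s, u r) :
    ∀ s ∈ Icc a b, u s ≤ C * exp (K * (s - a)) := by
  intro s hs
  have hab : a ≤ b := hs.1.trans hs.2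
  have hprimitive : ∀ x ∈ Icc a b, (∫ r in a..x, u r) ≤ gronwallBound 0 K C (x - a) := by
    refine le_gronwallBound_of_liminf_deriv_right_le (f' := u) ?_
      (fun x hx _ hr => (hasDerivWithinAt_integral_Ici hu hx).liminf_right_slope_le hr)
      (by simp) (fun x hx => by linarith [h x (Ico_subset_Icc_self hx)])
    exact (continuousOn_primitive_interval (μ := MeasureTheory.volume)
      (uIcc_of_le hab ▸ hu.integrableOn_Icc)).mono Icc_subset_uIcc
  calc u s ≤ C + K * ∫ r in a..s, u r := h s hs
    _ ≤ C + K * gronwallBound 0 K C (s - a) := by gcongr; exact hprimitive s hs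
    _ = C * exp (K * (s - a)) := add_mul_gronwallBound_zero C K (s - a)

theorem abs_sub_le_mul_exp_of_eq_add_integral {f : ℝ → ℝ} {L : ℝ≥0} (hf : LipschitzWith L f)
    {w₁ w₂ y₁ y₂ : ℝ → ℝ} {a b C : ℝ}
    (hy₁ : ContinuousOn y₁ (Icc a b)) (hy₂ : ContinuousOn y₂ (Icc a b))
    (heq₁ : ∀ s ∈ Icc a b, y₁ s = w₁ s + ∫ r in a..s, f (y₁ r))
    (heq₂ : ∀ s ∈ Icc a b, y₂ s = w₂ s + ∫ r in a..s, f (y₂ r))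
    (hw : ∀ s ∈ Icc a b, |w₁ s - w₂ s| ≤ C) :
    ∀ s ∈ Icc a b, |y₁ s - y₂ s| ≤ C * exp (L * (s - a)) := by
  have hΔ : ContinuousOn (fun s => |y₁ s - y₂ s|) (Icc a b) := (hy₁.sub hy₂).abs
  refine le_mul_exp_of_le_add_mul_integral hΔ L.coe_nonneg fun s hs => ?_
  have hint {g : ℝ → ℝ} (hg : ContinuousOn g (Icc a b)) :
      IntervalIntegrable g MeasureTheory.volume a s :=
    (hg.mono (Icc_subset_Icc_right hs.2)).intervalIntegrable_of_Icc hs.1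
  have hdrift : |∫ r in a..s, f (y₁ r) - f (y₂ r)| ≤ L * ∫ r in a..s, |y₁ r - y₂ r| := by
    rw [← integral_const_mul]
    refine norm_integral_le_of_norm_le (f := fun r => f (y₁ r) - f (y₂ r)) hs.1
      (Eventually.of_forall fun r _ => ?_) ((hint hΔ).const_mul _)
    simpa only [Real.dist_eq, Real.norm_eq_abs] using hf.dist_le_mul (y₁ r) (y₂ r)
  have hfy {y : ℝ → ℝ} (hy : ContinuousOn y (Icc a b)) :
      ContinuousOn (fun r => f (y r)) (Icc a b) :=
    hf.continuous.comp_continuousOn hy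
  calc |y₁ s - y₂ s|
      = |(w₁ s - w₂ s) + ∫ r in a..s, f (y₁ r) - f (y₂ r)| := by
        rw [integral_sub (hint (hfy hy₁)) (hint (hfy hy₂)), heq₁ s hs, heq₂ s hs]
        congr 1; ring
    _ ≤ |w₁ s - w₂ s| + |∫ r in a..s, f (y₁ r) - f (y₂ r)| := abs_add_le _ _
    _ ≤ C + L * ∫ r in a..s, |y₁ r - y₂ r| := add_le_add (hw s hs) hdrift

theorem lipschitzWith_mul_negPart_sub_mul_posPart {θ γ : ℝ} (hθ : 0 ≤ θ) (hγ : 0 ≤ γ) :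
    LipschitzWith (θ + γ).toNNReal (fun x : ℝ => γ * max (-x) 0 - θ * max x 0) := by
  refine LipschitzWith.of_dist_le_mul fun x y => ?_
  rw [Real.coe_toNNReal _ (add_nonneg hθ hγ), Real.dist_eq, Real.dist_eq]
  have hpos : |max x 0 - max y 0| ≤ |x - y| := abs_max_sub_max_le_abs x y 0
  have hneg : |max (-x) 0 - max (-y) 0| ≤ |x - y| := by
    simpa only [neg_sub_neg, abs_sub_comm] using abs_max_sub_max_le_abs (-x) (-y) 0
  calc |γ * max (-x) 0 - θ * max x 0 - (γ * max (-y) 0 - θ * max y 0)|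
      = |γ * (max (-x) 0 - max (-y) 0) - θ * (max x 0 - max y 0)| := by congr 1; ring
    _ ≤ γ * |max (-x) 0 - max (-y) 0| + θ * |max x 0 - max y 0| := by
        refine (abs_sub _ _).trans ?_
        rw [abs_mul, abs_mul, abs_of_nonneg hγ, abs_of_nonneg hθ]
    _ ≤ γ * |x - y| + θ * |x - y| :=
        add_le_add (mul_le_mul_of_nonneg_left hneg hγ) (mul_le_mul_of_nonneg_left hpos hθ)
    _ = (θ + γ) * |x - y| := by ring

theorem integral_mul_negPart_sub_mul_posPart {y : ℝ → ℝ} {a b : ℝ}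
    (hy : ContinuousOn y (uIcc a b)) (θ γ : ℝ) :
    ∫ r in a..b, γ * max (-y r) 0 - θ * max (y r) 0
      = γ * (∫ r in a..b, max (-y r) 0) - θ * ∫ r in a..b, max (y r) 0 := by
  rw [integral_sub, integral_const_mul, integral_const_mul]
  · exact ((hy.neg.sup continuousOn_const).const_smul γ).intervalIntegrable
  · exact ((hy.sup continuousOn_const).const_smul θ).intervalIntegrable

theorem supNorm_nonneg (f : ℝ → ℝ) (t : ℝ) : 0 ≤ supNorm f t :=
  Real.sSup_nonneg fun _ ⟨_, _, hx⟩ => hx ▸ abs_nonneg _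

theorem abs_le_supNorm {f : ℝ → ℝ} {s t : ℝ} (hf : ContinuousOn f (Icc 0 t))
    (hs : s ∈ Icc 0 t) : |f s| ≤ supNorm f t :=
  le_csSup (isCompact_Icc.image_of_continuousOn hf.abs).bddAbove ⟨s, hs, rfl⟩

theorem supNorm_le {f : ℝ → ℝ} {t c : ℝ} (hc : 0 ≤ c) (h : ∀ s ∈ Icc 0 t, |f s| ≤ c) :
    supNorm f t ≤ c :=
  Real.sSup_le (fun _ ⟨s, hs, hx⟩ => hx ▸ h s hs) hc

theorem stmt_12_general (θ γ : ℝ) (hθ : 0 < θ) (hγ : 0 < γ)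
    (w₁ w₂ y₁ y₂ : ℝ → ℝ)
    (hw₁ : ContinuousOn w₁ (Set.Ici 0)) (hw₂ : ContinuousOn w₂ (Set.Ici 0))
    (hy₁ : ContinuousOn y₁ (Set.Ici 0)) (hy₂ : ContinuousOn y₂ (Set.Ici 0))
    (heq₁ : ∀ t : ℝ, 0 ≤ t →
      y₁ t = w₁ t - θ * (∫ s in (0:ℝ)..t, max (y₁ s) 0)
        + γ * (∫ s in (0:ℝ)..t, max (-y₁ s) 0))
    (heq₂ : ∀ t : ℝ, 0 ≤ t →
      y₂ t = w₂ t - θ * (∫ s in (0:ℝ)..t, max (y₂ s) 0)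
        + γ * (∫ s in (0:ℝ)..t, max (-y₂ s) 0)) :
    ∀ t : ℝ, 0 ≤ t →
      supNorm (fun s => y₁ s - y₂ s) t
        ≤ Real.exp ((θ + γ) * t) * supNorm (fun s => w₁ s - w₂ s) t := by
  intro t _
  have hIcc : Icc 0 t ⊆ Ici 0 := Icc_subset_Ici_self
  have hintegral_form {w y : ℝ → ℝ} (hy : ContinuousOn y (Ici 0))
      (heq : ∀ t : ℝ, 0 ≤ t → y t = w t - θ * (∫ s in (0:ℝ)..t, max (y s) 0)
        + γ * (∫ s in (0:ℝ)..t, max (-y s) 0)) (s : ℝ) (hs : s ∈ Icc 0 t) :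
      y s = w s + ∫ r in (0:ℝ)..s, γ * max (-y r) 0 - θ * max (y r) 0 := by
    rw [integral_mul_negPart_sub_mul_posPart (hy.mono (uIcc_of_le hs.1 ▸ Icc_subset_Ici_self)),
      heq s hs.1]
    ring
  have hbound := abs_sub_le_mul_exp_of_eq_add_integral
    (lipschitzWith_mul_negPart_sub_mul_posPart hθ.le hγ.le) (hy₁.mono hIcc) (hy₂.mono hIcc)
    (hintegral_form hy₁ heq₁) (hintegral_form hy₂ heq₂)
    fun s hs => abs_le_supNorm ((hw₁.sub hw₂).mono hIcc) hs
  rw [Real.coe_toNNReal _ (add_nonneg hθ.le hγ.le)] at hbound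
  refine supNorm_le (mul_nonneg (exp_pos _).le (supNorm_nonneg _ _)) fun s hs => ?_
  calc |y₁ s - y₂ s| ≤ supNorm (fun s => w₁ s - w₂ s) t * exp ((θ + γ) * (s - 0)) := hbound s hs
    _ ≤ exp ((θ + γ) * t) * supNorm (fun s => w₁ s - w₂ s) t := by
      rw [mul_comm, sub_zero]
      gcongr
      · exact supNorm_nonneg _ _
      · exact hs.2

/-- For `α, β, θ, γ > 0`, if `y_i(t) = w_i(t) - θ∫₀ᵗ y_i⁺(s) ds
+ γ∫₀ᵗ y_i⁻(s) ds` for `i = 1, 2`, then for all `t ≥ 0`,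
`sup_{s ∈ [0,t]} |y₁(s) - y₂(s)| ≤ e^{(θ+γ)t} · sup_{s ∈ [0,t]} |w₁(s) - w₂(s)|`. -/
theorem stmt_12 (α β θ γ : ℝ) (hα : 0 < α) (hβ : 0 < β) (hθ : 0 < θ) (hγ : 0 < γ)
    (w₁ w₂ y₁ y₂ : ℝ → ℝ)
    (hw₁ : ContinuousOn w₁ (Set.Ici 0)) (hw₂ : ContinuousOn w₂ (Set.Ici 0))
    (hy₁ : ContinuousOn y₁ (Set.Ici 0)) (hy₂ : ContinuousOn y₂ (Set.Ici 0))
    (heq₁ : ∀ t : ℝ, 0 ≤ t →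
      y₁ t = w₁ t - θ * (∫ s in (0:ℝ)..t, max (y₁ s) 0)
        + γ * (∫ s in (0:ℝ)..t, max (-y₁ s) 0))
    (heq₂ : ∀ t : ℝ, 0 ≤ t →
      y₂ t = w₂ t - θ * (∫ s in (0:ℝ)..t, max (y₂ s) 0)
        + γ * (∫ s in (0:ℝ)..t, max (-y₂ s) 0)) :
    ∀ t : ℝ, 0 ≤ t →
      supNorm (fun s => y₁ s - y₂ s) t
        ≤ Real.exp ((θ + γ) * t) * supNorm (fun s => w₁ s - w₂ s) t :=
  stmt_12_general θ γ hθ hγ w₁ w₂ y₁ y₂ hw₁ hw₂ hy₁ hy₂ heq₁ heq₂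
end
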